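/- arXiv:2407.18599 — 6 statements merged into one kernel-verified Lean document; each statement's English description precedes it below -/
import Mathlib

section
/- Let w be a word over a finite alphabet Σ with |Σ| = σ ≥ 2 and alph(w) = Σ, and let k be a natural number with k > ι(w). Then there exists a letter a ∈ Σ such that for every word v ∈ Σ^k with m(w)·a ∈ ScatFact_{ι(w)+1}(v), we have v ∉ ScatFact_k(w). -/
open List

universe u
variable {α : Type u}

/-- `ScatFact k w` is the set of scattered factors (subsequences) of `w` of length exactly `k`. -/
def ScatFact (k : ℕ) (w : List α) : Set (List α) :=
  {v | v.length = k ∧ v.Sublist w}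

/-- `w` is `k`-universal over the alphabet `S`: every word of length `k` over `S`
is a scattered factor of `w`. -/
def IsKUniversal [DecidableEq α] (S : Finset α) (k : ℕ) (w : List α) : Prop :=
  ∀ v : List α, v.length = k → (∀ x ∈ v, x ∈ S) → v.Sublist w

/-- The universality index of `w` over the alphabet `S`: the largest `k` such that
`w` is `k`-universal over `S`. -/
noncomputable def univIdx [DecidableEq α] (S : Finset α) (w : List α) : ℕ :=
  sSup {k | IsKUniversal S k w}

/-- `IsArchFact S w inners modus rest` says that `w` has the arch factorization
`w = ar_1 ⋯ ar_n · rest` over the alphabet `S`, where the `i`-th arch is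
`ar_i = inners[i] ++ [modus[i]]`: each arch contains every letter of `S`,
the last letter of each arch occurs only once within the arch, and the
alphabet of the rest is a proper subset of `S`. -/
def IsArchFact [DecidableEq α] (S : Finset α) (w : List α)
    (inners : List (List α)) (modus : List α) (rest : List α) : Prop :=
  inners.length = modus.length ∧
  w = (List.zipWith (fun inn m => inn ++ [m]) inners modus).flatten ++ rest ∧
  (∀ p ∈ List.zip inners modus, ∀ x ∈ S, x ∈ p.1 ++ [p.2]) ∧
  (∀ p ∈ List.zip inners modus, p.2 ∉ p.1) ∧
  rest.toFinset ⊂ S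

/-- `v` is perfect `k`-universal over `S`: `alph(v) = S`, the universality index of `v`
over `S` is `k`, and the rest of its arch factorization over `S` is empty. -/
def IsPerfectUniv [DecidableEq α] (S : Finset α) (k : ℕ) (v : List α) : Prop :=
  v.toFinset = S ∧ univIdx S v = k ∧ ∃ inners modus, IsArchFact S v inners modus []

/-- `v` is minimal perfect `k`-universal over `S`. -/
def IsMinPerfectUniv [DecidableEq α] (S : Finset α) (k : ℕ) (v : List α) : Prop :=
  IsPerfectUniv S k v ∧ ∀ v' : List α, IsPerfectUniv S k v' → v.length ≤ v'.length

/-- `nextAlphPos w i s` (positions `1`-indexed): the least position `j` such that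
`w[i+1..j]` contains exactly `s` distinct letters, or `none` (representing `-1`)
if `w[i+1..|w|]` contains fewer than `s` distinct letters. -/
noncomputable def nextAlphPos [DecidableEq α] (w : List α) (i s : ℕ) : Option ℕ :=
  if (w.drop i).toFinset.card < s then none
  else some (sInf {j | ((w.drop i).take (j - i)).toFinset.card = s})

/-- The letter of `w` at (1-indexed) position `j`. -/
def letterAt [Inhabited α] (w : List α) (j : ℕ) : α := w.getD (j - 1) default

/-- The word over `Fin σ` with `ι` arches, whose first arch is `a_1 a_2 ⋯ a_σ`
and each later arch is the reverse of the previous one. -/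
def wmin (σ ι : ℕ) : List (Fin σ) :=
  ((List.range ι).map (fun i =>
    if i % 2 = 0 then List.finRange σ else (List.finRange σ).reverse)).flatten

/-!
Matching a scattered factor greedily from the left, the `i`-th letter of the modus cannot be
matched before the end of the `i`-th arch, because it does not occur earlier in that arch.
So once `m(w)` is matched, only the rest `r(w)` is left, and any letter `a` missing from
`r(w)` cannot follow: `m(w) · a` is not a scattered factor of `w`, hence of no
scattered factor `v` of `w`.
-/

theorem sublist_of_cons_sublist_append_cons {m : α} {inn t tail : List α} (hm : m ∉ inn)
    (h : (m :: t).Sublist (inn ++ m :: tail)) : t.Sublist tail := by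
  induction inn with
  | nil => exact cons_sublist_cons.mp h
  | cons b inn ih =>
    rw [mem_cons, not_or] at hm
    cases h with
    | cons _ h => exact ih hm.2 h
    | cons_cons _ _ => exact absurd rfl hm.1

theorem sublist_of_append_sublist_arches {inners : List (List α)} {modus t rest : List α}
    (hlast : ∀ p ∈ zip inners modus, p.2 ∉ p.1)
    (h : (modus ++ t).Sublist ((zipWith (fun inn m => inn ++ [m]) inners modus).flatten ++ rest)) :
    t.Sublist rest := by
  induction modus generalizing inners with
  | nil => simpa using h
  | cons m modus ih =>
    cases inners with
    | nil => exact (sublist_append_right (m :: modus) t).trans (by simpa using h)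
    | cons inn inners =>
      have hm : m ∉ inn := hlast (inn, m) (by simp)
      simp only [zipWith_cons_cons, flatten_cons, cons_append, append_assoc] at h
      exact ih (fun p hp => hlast p (mem_cons_of_mem _ hp))
        (sublist_of_cons_sublist_append_cons hm h)

theorem stmt0_general {α : Type u} [Fintype α] [DecidableEq α]
    (w : List α)
    (k : ℕ)
    (inners : List (List α)) (modus : List α) (rest : List α)
    (hfact : IsArchFact Finset.univ w inners modus rest) :
    ∃ a : α, ∀ v : List α, v.length = k →
      (modus ++ [a]) ∈ ScatFact (univIdx Finset.univ w + 1) v →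
      v ∉ ScatFact k w := by
  obtain ⟨-, rfl, -, hlast, hrest⟩ := hfact
  obtain ⟨a, -, ha⟩ := Finset.exists_of_ssubset hrest
  refine ⟨a, fun v _ hv hvw => ha ?_⟩
  have hsub := sublist_of_append_sublist_arches hlast (hv.2.trans hvw.2)
  exact mem_toFinset.mpr (singleton_sublist.mp hsub)

theorem stmt0 {α : Type u} [Fintype α] [DecidableEq α]
    (hsigma : 2 ≤ Fintype.card α) (w : List α) (halph : ∀ a : α, a ∈ w)
    (k : ℕ) (hk : univIdx Finset.univ w < k)
    (inners : List (List α)) (modus : List α) (rest : List α)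
    (hfact : IsArchFact Finset.univ w inners modus rest) :
    ∃ a : α, ∀ v : List α, v.length = k →
      (modus ++ [a]) ∈ ScatFact (univIdx Finset.univ w + 1) v →
      v ∉ ScatFact k w :=
  stmt0_general w k inners modus rest hfact
end

section
/- Let Σ be a finite alphabet with |Σ| = σ ≥ 2, let ι and k be natural numbers with k > ι, and let a ∈ Σ. Then there exists a word w over Σ with alph(w) = Σ and ι(w) = ι such that for every word v ∈ Σ^k \ ScatFact_k(w), we have m(w)·a ∈ ScatFact_{ι+1}(v). -/
open List

universe u
variable {α : Type u}

/-!
Let `u` consist of `k` copies of a listing of `Σ ∖ {a}` and put `w = (u a)^ι u`. The arches of `w`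
are the blocks `u a`, so `m(w) = a^ι`, and `ι(w) = ι` because `a` occurs exactly `ι` times in `w`.
A word `v` of length `k` with at most `ι` letters `a` embeds into `w`: each maximal `a`-free block
of `v` has length at most `k`, hence embeds into a copy of `u`, and the letters `a` go to the
separators. So every `v ∈ Σ^k ∖ ScatFact_k(w)` contains `a^(ι+1) = m(w) a`.
-/

theorem sublist_flatten_replicate_of_forall_mem {c v : List α} {n : ℕ}
    (hc : ∀ x ∈ v, x ∈ c) (hn : v.length ≤ n) : v <+ (replicate n c).flatten := by
  induction v generalizing n with
  | nil => exact nil_sublist _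
  | cons x v ih =>
    cases n with
    | zero => simp at hn
    | succ n =>
      rw [replicate_succ, flatten_cons]
      exact (singleton_sublist.mpr (hc x mem_cons_self)).append
        (ih (fun y hy => hc y (mem_cons_of_mem x hy)) (by simpa using hn))

section

variable [DecidableEq α]

theorem sublist_flatten_replicate_append_of_count_le {a : α} {u : List α} {k : ℕ}
    (hu : ∀ t : List α, a ∉ t → t.length ≤ k → t <+ u) (m : ℕ) {v : List α}
    (hcount : v.count a ≤ m) (hlen : v.length ≤ k) :
    v <+ (replicate m (u ++ [a])).flatten ++ u := by
  induction m generalizing v with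
  | zero => simpa using hu v (fun h => by have := count_pos_iff.mpr h; omega) hlen
  | succ m ih =>
    by_cases hav : a ∈ v
    · obtain ⟨t, d, hat, rfl, -⟩ := exists_erase_eq hav
      simp only [count_append, count_cons_self, count_eq_zero.mpr hat, length_append,
        length_cons] at hcount hlen
      rw [append_cons, replicate_succ, flatten_cons, append_assoc (u ++ [a])]
      exact ((hu t hat (by omega)).append (Sublist.refl [a])).append
        (ih (v := d) (by omega) (by omega))
    · exact (hu v hav hlen).trans (sublist_append_right _ u)

theorem univIdx_eq_of_forall_isKUniversal_iff {S : Finset α} {w : List α} {n : ℕ}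
    (h : ∀ j, IsKUniversal S j w ↔ j ≤ n) : univIdx S w = n := by
  rw [univIdx, show {j | IsKUniversal S j w} = Set.Iic n from Set.ext h, csSup_Iic]

theorem isKUniversal_flatten_replicate_append {S : Finset α} {c : List α}
    (hc : ∀ x ∈ S, x ∈ c) {j n : ℕ} (hj : j ≤ n) (r : List α) :
    IsKUniversal S j ((replicate n c).flatten ++ r) := fun _ hv hvS =>
  (sublist_flatten_replicate_of_forall_mem (fun x hx => hc x (hvS x hx)) (hv ▸ hj)).trans
    (sublist_append_left _ _)

theorem IsKUniversal.le_count {S : Finset α} {j : ℕ} {w : List α} (h : IsKUniversal S j w)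
    {a : α} (ha : a ∈ S) : j ≤ w.count a :=
  replicate_sublist_iff.mp (h _ length_replicate fun _ hx => eq_of_mem_replicate hx ▸ ha)

theorem isArchFact_flatten_replicate {S : Finset α} {a : α} {u : List α}
    (hS : ∀ x ∈ S, x ∈ u ++ [a]) (hau : a ∉ u) (hrest : u.toFinset ⊂ S) (n : ℕ) :
    IsArchFact S ((replicate n (u ++ [a])).flatten ++ u) (replicate n u) (replicate n a) u := by
  have harch : ∀ p ∈ zip (replicate n u) (replicate n a), p = (u, a) := fun p hp => by
    rw [zip_replicate] at hp
    exact eq_of_mem_replicate hp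
  exact ⟨by simp, by simp, fun p hp => harch p hp ▸ hS, fun p hp => harch p hp ▸ hau, hrest⟩

theorem sublist_flatten_replicate_erase [Fintype α] {a : α} {k : ℕ} {t : List α} (ht : a ∉ t)
    (hlen : t.length ≤ k) : t <+ (replicate k (Finset.univ.erase a).toList).flatten :=
  sublist_flatten_replicate_of_forall_mem
    (fun x hx => by simpa using fun hxa : x = a => ht (hxa ▸ hx)) hlen

theorem mem_flatten_replicate_erase [Fintype α] {a x : α} (hx : x ≠ a) {k : ℕ} (hk : k ≠ 0) :
    x ∈ (replicate k (Finset.univ.erase a).toList).flatten := by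
  simp [mem_flatten, mem_replicate, hk, hx]

theorem notMem_flatten_replicate_erase [Fintype α] (a : α) (k : ℕ) :
    a ∉ (replicate k (Finset.univ.erase a).toList).flatten := by
  simp [mem_flatten, mem_replicate]

end

theorem stmt1_general {α : Type u} [Fintype α] [DecidableEq α]
    (iota k : ℕ) (hiota : 1 ≤ iota) (hk : iota < k) (a : α) :
    ∃ (w : List α) (inners : List (List α)) (modus : List α) (rest : List α),
      (∀ b : α, b ∈ w) ∧ univIdx Finset.univ w = iota ∧
      IsArchFact Finset.univ w inners modus rest ∧
      ∀ v : List α, v.length = k → v ∉ ScatFact k w →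
        (modus ++ [a]) ∈ ScatFact (iota + 1) v := by
  set u := (replicate k (Finset.univ.erase a).toList).flatten
  have hau : a ∉ u := notMem_flatten_replicate_erase a k
  have hS : ∀ x ∈ (Finset.univ : Finset α), x ∈ u ++ [a] := fun x _ => by
    rcases eq_or_ne x a with rfl | hxa
    · exact mem_append_right _ (mem_singleton_self x)
    · exact mem_append_left _ (mem_flatten_replicate_erase hxa (by omega))
  have hrest : u.toFinset ⊂ Finset.univ :=
    Finset.ssubset_univ_iff.mpr fun h => hau (mem_toFinset.mp (h ▸ Finset.mem_univ a))
  have hcount : ((replicate iota (u ++ [a])).flatten ++ u).count a = iota := by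
    simp [count_flatten, count_eq_zero.mpr hau]
  refine ⟨_, replicate iota u, replicate iota a, u, fun b => ?_, ?_,
    isArchFact_flatten_replicate hS hau hrest iota, fun v hv hvw => ?_⟩
  · exact (isKUniversal_flatten_replicate_append hS hiota u [b] rfl (by simp)).subset
      (mem_singleton_self b)
  · refine univIdx_eq_of_forall_isKUniversal_iff fun j => ⟨fun h => ?_, fun hj => ?_⟩
    · exact hcount ▸ h.le_count (Finset.mem_univ a)
    · exact isKUniversal_flatten_replicate_append hS hj u
  · have hcount_v : iota + 1 ≤ v.count a := by
      by_contra hlt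
      exact hvw ⟨hv, sublist_flatten_replicate_append_of_count_le
        (fun _ => sublist_flatten_replicate_erase) iota (by omega) hv.le⟩
    refine ⟨by simp, ?_⟩
    rw [← replicate_succ']
    exact replicate_sublist_iff.mpr hcount_v

theorem stmt1 {α : Type u} [Fintype α] [DecidableEq α]
    (hsigma : 2 ≤ Fintype.card α) (iota k : ℕ) (hiota : 1 ≤ iota) (hk : iota < k) (a : α) :
    ∃ (w : List α) (inners : List (List α)) (modus : List α) (rest : List α),
      (∀ b : α, b ∈ w) ∧ univIdx Finset.univ w = iota ∧
      IsArchFact Finset.univ w inners modus rest ∧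
      ∀ v : List α, v.length = k → v ∉ ScatFact k w →
        (modus ++ [a]) ∈ ScatFact (iota + 1) v :=
  stmt1_general iota k hiota hk a
end

section
/- Let Σ be a finite alphabet with |Σ| = σ ≥ 2, let k be a natural number, and let w be a word over Σ with alph(w) = Σ and k > ι(w). Then the following are equivalent: (1) for all words w' over Σ with ι(w') = ι(w), |ScatFact_k(w')| ≤ |ScatFact_k(w)|; (2) there exists exactly one letter a ∈ Σ such that ScatFact_k(w) = { v ∈ Σ^k : m(w)·a ∉ ScatFact_{ι(w)+1}(v) }. -/
open List

universe u
variable {α : Type u}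

/-!
The number of words of length `k` avoiding a word `u` as a scattered factor depends only on
`|u|`: splitting off the first letter gives the recursion
`A(n + 1, c u) = A(n, u) + (σ - 1) A(n, c u)`. A word of universality index `ι` misses some
word of length `ι + 1`, so it has at most `A(k, ι + 1)` scattered factors of length `k`; for `w`
itself, `m(w) x` is missed for every letter `x` absent from the rest.

The bound is attained: if `B` is an `a`-free word containing every `a`-free word of length `k`,
then the scattered factors of length `k` of `(B a)^ι B` are exactly the words with at most `ι`
letters `a`. So `w` is maximal iff its scattered factors of length `k` are exactly the avoiders
of `m(w) x`, and that letter is unique since `m(w) x^(k - ι)` avoids `m(w) a` for every `a ≠ x`.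
-/

namespace List

theorem cons_sublist_append_of_notMem {a : α} {s l₁ l₂ : List α} (ha : a ∉ l₁)
    (h : a :: s <+ l₁ ++ l₂) : a :: s <+ l₂ := by
  obtain ⟨_ | ⟨b, p⟩, q, hpq, hp, hq⟩ := sublist_append_iff.1 h
  · simpa [hpq] using hq
  · obtain ⟨rfl, -⟩ := cons_eq_cons.1 hpq
    exact absurd (hp.subset mem_cons_self) ha

theorem sublist_flatten_replicate {s l : List α} (hs : ∀ x ∈ s, x ∈ l) {n : ℕ}
    (hn : s.length ≤ n) : s <+ (replicate n l).flatten := by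
  induction s generalizing n with
  | nil => exact nil_sublist _
  | cons c s ih =>
    cases n with
    | zero => simp at hn
    | succ n =>
      rw [replicate_succ, flatten_cons, ← singleton_append]
      exact (singleton_sublist.2 (hs c mem_cons_self)).append
        (ih (fun x hx => hs x (mem_cons_of_mem _ hx)) (by simpa using hn))

theorem cons_sublist_cons_iff_ite [DecidableEq α] {c d : α} {u v : List α} :
    c :: u <+ d :: v ↔ (if d = c then u else c :: u) <+ v := by
  split_ifs with hdc
  · rw [hdc, cons_sublist_cons]
  · simp [sublist_cons_iff, Ne.symm hdc]

end List

section Universality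
variable [DecidableEq α] {S : Finset α} {w : List α}

theorem univIdx_eq_of_isKUniversal_iff {m : ℕ} (h : ∀ n, IsKUniversal S n w ↔ n ≤ m) :
    univIdx S w = m := by
  rw [univIdx, show {n | IsKUniversal S n w} = Set.Iic m from Set.ext h, csSup_Iic]

theorem not_isKUniversal_univIdx_succ (hS : S.Nonempty) :
    ¬ IsKUniversal S (univIdx S w + 1) w := by
  obtain ⟨c, hc⟩ := hS
  have hbdd : BddAbove {n | IsKUniversal S n w} := ⟨w.length, fun n hn => by
    simpa using
      (hn (replicate n c) length_replicate fun x hx => eq_of_mem_replicate hx ▸ hc).length_le⟩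
  exact fun h => (le_csSup hbdd h).not_gt (Nat.lt_succ_self _)

end Universality

section ArchFactorization
variable {S : Finset α} {inners : List (List α)} {modus : List α}

theorem sublist_of_modus_append_sublist (hlen : inners.length = modus.length)
    (hmod : ∀ p ∈ zip inners modus, p.2 ∉ p.1) {t r : List α}
    (h : modus ++ t <+ (zipWith (fun inn m => inn ++ [m]) inners modus).flatten ++ r) :
    t <+ r := by
  induction inners generalizing modus with
  | nil => simpa [eq_nil_of_length_eq_zero hlen.symm] using h
  | cons i is ih =>
    obtain ⟨m, ms, rfl⟩ := exists_cons_of_length_eq_add_one hlen.symm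
    simp only [zipWith_cons_cons, flatten_cons, cons_append, append_assoc] at h
    have hm : m :: (ms ++ t) <+ m :: ((zipWith _ is ms).flatten ++ r) :=
      cons_sublist_append_of_notMem (hmod (i, m) (by simp)) h
    exact ih (by simpa using hlen) (fun p hp => hmod p (mem_cons_of_mem _ hp))
      (cons_sublist_cons.1 hm)

theorem sublist_arches_of_length_le (hlen : inners.length = modus.length)
    (harch : ∀ p ∈ zip inners modus, ∀ x ∈ S, x ∈ p.1 ++ [p.2]) {v : List α}
    (hv : v.length ≤ modus.length) (hvS : ∀ x ∈ v, x ∈ S) :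
    v <+ (zipWith (fun inn m => inn ++ [m]) inners modus).flatten := by
  induction inners generalizing modus v with
  | nil => simp_all [eq_nil_of_length_eq_zero hlen.symm]
  | cons i is ih =>
    obtain ⟨m, ms, rfl⟩ := exists_cons_of_length_eq_add_one hlen.symm
    rw [zipWith_cons_cons, flatten_cons]
    cases v with
    | nil => exact nil_sublist _
    | cons c v =>
      rw [← singleton_append]
      exact (singleton_sublist.2 (harch (i, m) (by simp) c (hvS c mem_cons_self))).append
        (ih (by simpa using hlen) (fun p hp => harch p (mem_cons_of_mem _ hp))
          (by simpa using hv) (fun x hx => hvS x (mem_cons_of_mem _ hx)))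

end ArchFactorization

namespace IsArchFact

variable [DecidableEq α] {S : Finset α} {w : List α} {inners : List (List α)}
  {modus rest : List α}

theorem exists_notMem_rest (h : IsArchFact S w inners modus rest) : ∃ x ∈ S, x ∉ rest := by
  obtain ⟨x, hxS, hx⟩ := Finset.exists_of_ssubset h.2.2.2.2
  exact ⟨x, hxS, fun hx' => hx (mem_toFinset.2 hx')⟩

theorem sublist_rest (h : IsArchFact S w inners modus rest) {t : List α}
    (ht : modus ++ t <+ w) : t <+ rest := by
  obtain ⟨hlen, rfl, -, hmod, -⟩ := h
  exact sublist_of_modus_append_sublist hlen hmod ht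

theorem sublist_of_length_le (h : IsArchFact S w inners modus rest) {v : List α}
    (hv : v.length ≤ modus.length) (hvS : ∀ x ∈ v, x ∈ S) : v <+ w := by
  obtain ⟨hlen, rfl, harch, -, -⟩ := h
  exact (sublist_arches_of_length_le hlen harch hv hvS).trans (sublist_append_left _ _)

theorem univIdx_eq [Fintype α] (h : IsArchFact Finset.univ w inners modus rest) :
    univIdx Finset.univ w = modus.length := by
  refine univIdx_eq_of_isKUniversal_iff fun n => ⟨fun hn => ?_, fun hn v hv _ =>
    h.sublist_of_length_le (hv ▸ hn) fun x _ => Finset.mem_univ x⟩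
  obtain ⟨x, -, hx⟩ := h.exists_notMem_rest
  by_contra! hlt
  have hsub := h.sublist_rest (hn (modus ++ replicate (n - modus.length) x)
    (by simp; omega) fun y _ => Finset.mem_univ y)
  exact hx (hsub.subset (mem_replicate.2 ⟨by omega, rfl⟩))

end IsArchFact

section Counting
variable [Fintype α] [DecidableEq α]

open Finset

noncomputable def wordsAvoiding (n : ℕ) (u : List α) : Finset (List α) :=
  (List.finite_length_eq α n).toFinset.filter (¬ u <+ ·)

@[simp]
theorem mem_wordsAvoiding {n : ℕ} {u v : List α} :
    v ∈ wordsAvoiding n u ↔ v.length = n ∧ ¬ u <+ v := by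
  simp [wordsAvoiding]

theorem card_wordsAvoiding_succ_cons (n : ℕ) (c : α) (u : List α) :
    #(wordsAvoiding (n + 1) (c :: u)) =
      #(wordsAvoiding n u) + (Fintype.card α - 1) * #(wordsAvoiding n (c :: u)) := by
  have hsplit : #(wordsAvoiding (n + 1) (c :: u)) =
      ∑ d, #(wordsAvoiding n (if d = c then u else c :: u)) := by
    rw [← card_sigma]
    symm
    refine card_bij (fun p _ => p.1 :: p.2) ?_ ?_ ?_
    · rintro ⟨d, v⟩ h
      simp only [Finset.mem_sigma, mem_univ, true_and, mem_wordsAvoiding] at h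
      simpa [cons_sublist_cons_iff_ite] using h
    · rintro ⟨d, v⟩ - ⟨d', v'⟩ - h
      obtain ⟨rfl, rfl⟩ := cons_eq_cons.1 h
      rfl
    · rintro (_ | ⟨d, v⟩) h
      · simp at h
      · refine ⟨⟨d, v⟩, ?_, rfl⟩
        simpa [cons_sublist_cons_iff_ite] using h
  rw [hsplit, Fintype.sum_eq_add_sum_compl c, if_pos rfl,
    sum_congr rfl fun d hd => by rw [if_neg (mem_compl.1 hd ∘ Finset.mem_singleton.2)],
    sum_const, card_compl, card_singleton, smul_eq_mul]

theorem card_wordsAvoiding_eq_of_length_eq {n : ℕ} {u u' : List α}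
    (h : u.length = u'.length) : #(wordsAvoiding n u) = #(wordsAvoiding n u') := by
  induction n generalizing u u' with
  | zero =>
    congr 1
    ext v
    simp only [mem_wordsAvoiding, length_eq_zero_iff, and_congr_right_iff]
    rintro rfl
    simp [← length_eq_zero_iff, h]
  | succ n ih =>
    match u, u', h with
    | [], [], _ => rfl
    | c :: u, c' :: u', h =>
      rw [card_wordsAvoiding_succ_cons, card_wordsAvoiding_succ_cons,
        ih (by simpa using h), ih h]

theorem eq_of_wordsAvoiding_append_singleton_eq {n : ℕ} {m : List α} {a b : α}
    (hm : m.length < n) (h : wordsAvoiding n (m ++ [a]) = wordsAvoiding n (m ++ [b])) :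
    a = b := by
  set v := m ++ replicate (n - m.length) b
  have hb : m ++ [b] <+ v := (append_sublist_append_left m).2
    (singleton_sublist.2 (mem_replicate.2 ⟨by omega, rfl⟩))
  have ha : m ++ [a] <+ v := by
    by_contra ha
    exact (mem_wordsAvoiding.1 (h ▸ mem_wordsAvoiding.2 ⟨by simp [v]; omega, ha⟩)).2 hb
  exact eq_of_mem_replicate (singleton_sublist.1 ((append_sublist_append_left m).1 ha))

end Counting

section ScatFactBounds
variable [Fintype α] [DecidableEq α]

open Finset

theorem scatFact_subset_wordsAvoiding {k : ℕ} {u w : List α} (hu : ¬ u <+ w) :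
    ScatFact k w ⊆ ↑(wordsAvoiding k u) :=
  fun _ ⟨hvk, hvw⟩ => mem_wordsAvoiding.2 ⟨hvk, fun huv => hu (huv.trans hvw)⟩

theorem ncard_scatFact_le_card_wordsAvoiding {k : ℕ} {u w : List α}
    (hu : u.length = univIdx Finset.univ w + 1) :
    (ScatFact k w).ncard ≤ #(wordsAvoiding k u) := by
  have hne : (Finset.univ : Finset α).Nonempty := by
    rcases u with _ | ⟨c, -⟩
    · simp at hu
    · exact ⟨c, mem_univ c⟩
  obtain ⟨u', hu'len, -, hu'⟩ : ∃ u', u'.length = univIdx Finset.univ w + 1 ∧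
      (∀ x ∈ u', x ∈ Finset.univ) ∧ ¬ u' <+ w := by
    simpa [IsKUniversal] using not_isKUniversal_univIdx_succ (w := w) hne
  calc (ScatFact k w).ncard ≤ (↑(wordsAvoiding k u') : Set (List α)).ncard :=
        Set.ncard_le_ncard (scatFact_subset_wordsAvoiding hu') (Finset.finite_toSet _)
    _ = #(wordsAvoiding k u) := by
        rw [Set.ncard_coe_finset, card_wordsAvoiding_eq_of_length_eq (hu'len.trans hu.symm)]

end ScatFactBounds

section ExtremalWord
variable [Fintype α] [DecidableEq α] (a : α) (k : ℕ)

noncomputable def avoidingBlock : List α := (replicate k (Finset.univ.erase a).toList).flatten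

noncomputable def extremalWord (ι : ℕ) : List α :=
  (replicate ι (avoidingBlock a k ++ [a])).flatten ++ avoidingBlock a k

variable {a k}

theorem notMem_avoidingBlock : a ∉ avoidingBlock a k := by
  simp [avoidingBlock, mem_flatten, mem_replicate]

theorem sublist_avoidingBlock {v : List α} (ha : a ∉ v) (hv : v.length ≤ k) :
    v <+ avoidingBlock a k :=
  sublist_flatten_replicate (fun x hx => by simpa using ne_of_mem_of_not_mem hx ha) hv

theorem extremalWord_succ (ι : ℕ) :
    extremalWord a k (ι + 1) = avoidingBlock a k ++ a :: extremalWord a k ι := by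
  simp [extremalWord, replicate_succ]

theorem count_extremalWord (ι : ℕ) : count a (extremalWord a k ι) = ι := by
  induction ι with
  | zero => simpa [extremalWord] using count_eq_zero.2 (notMem_avoidingBlock (a := a) (k := k))
  | succ ι ih => simp [extremalWord_succ, count_eq_zero.2 notMem_avoidingBlock, ih]

theorem sublist_extremalWord_iff {v : List α} (hv : v.length ≤ k) (ι : ℕ) :
    v <+ extremalWord a k ι ↔ count a v ≤ ι := by
  refine ⟨fun h => count_extremalWord (a := a) (k := k) ι ▸ h.count_le a, fun h => ?_⟩
  induction ι generalizing v with
  | zero =>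
    simpa [extremalWord] using sublist_avoidingBlock (count_eq_zero.1 (Nat.le_zero.1 h)) hv
  | succ ι ih =>
    rw [extremalWord_succ]
    by_cases ha : a ∈ v
    · obtain ⟨s, t, rfl, hs⟩ := eq_append_cons_of_mem ha
      simp only [length_append, length_cons, count_append, count_cons_self,
        count_eq_zero.2 hs] at hv h
      exact (sublist_avoidingBlock hs (by omega)).append
        (cons_sublist_cons.2 (ih (by omega) (by omega)))
    · exact (sublist_avoidingBlock ha hv).trans (sublist_append_left _ _)

theorem univIdx_extremalWord {ι : ℕ} (hι : ι ≤ k) :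
    univIdx Finset.univ (extremalWord a k ι) = ι := by
  refine univIdx_eq_of_isKUniversal_iff fun n => ⟨fun hn => ?_, fun hn v hv _ => ?_⟩
  · simpa [count_extremalWord] using
      (hn (replicate n a) length_replicate fun x _ => Finset.mem_univ x).count_le a
  · exact (sublist_extremalWord_iff (by omega) ι).2 ((count_le_length).trans (by omega))

theorem scatFact_extremalWord (ι : ℕ) :
    ScatFact k (extremalWord a k ι) = ↑(wordsAvoiding k (replicate (ι + 1) a)) := by
  ext v
  simp only [ScatFact, Set.mem_ofPred_eq, Finset.mem_coe, mem_wordsAvoiding,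
    replicate_sublist_iff, not_le, and_congr_right_iff]
  rintro rfl
  rw [sublist_extremalWord_iff le_rfl, Nat.lt_succ_iff]

end ExtremalWord

theorem stmt2_general {α : Type u} [Fintype α] [DecidableEq α]
    (k : ℕ) (w : List α)
    (hk : univIdx Finset.univ w < k)
    (inners : List (List α)) (modus : List α) (rest : List α)
    (hfact : IsArchFact Finset.univ w inners modus rest) :
    (∀ w' : List α, univIdx Finset.univ w' = univIdx Finset.univ w →
        (ScatFact k w').ncard ≤ (ScatFact k w).ncard) ↔
    (∃! a : α, ScatFact k w =
        {v : List α | v.length = k ∧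
          (modus ++ [a]) ∉ ScatFact (univIdx Finset.univ w + 1) v}) := by
  have hι := hfact.univIdx_eq
  obtain ⟨x, -, hx⟩ := hfact.exists_notMem_rest
  have hmodus (a : α) : {v : List α | v.length = k ∧
      (modus ++ [a]) ∉ ScatFact (univIdx Finset.univ w + 1) v} =
      ↑(wordsAvoiding k (modus ++ [a])) := by
    ext v
    simp [ScatFact, hι]
  simp only [hmodus]
  constructor
  · intro hmax
    have hle := hmax (extremalWord x k modus.length)
      (by rw [univIdx_extremalWord (by omega), hι])
    rw [scatFact_extremalWord, Set.ncard_coe_finset,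
      card_wordsAvoiding_eq_of_length_eq (u' := modus ++ [x]) (by simp)] at hle
    have hw : ScatFact k w = ↑(wordsAvoiding k (modus ++ [x])) :=
      Set.eq_of_subset_of_ncard_le
        (scatFact_subset_wordsAvoiding fun h => hx (singleton_sublist.1 (hfact.sublist_rest h)))
        (by rwa [Set.ncard_coe_finset]) (Finset.finite_toSet _)
    refine ⟨x, hw, fun a ha => ?_⟩
    exact eq_of_wordsAvoiding_append_singleton_eq (by omega) (Finset.coe_inj.1 (ha.symm.trans hw))
  · rintro ⟨a, ha, -⟩ w' hw'
    rw [ha, Set.ncard_coe_finset]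
    exact ncard_scatFact_le_card_wordsAvoiding (by simp [hw', hι])

theorem stmt2 {α : Type u} [Fintype α] [DecidableEq α]
    (hsigma : 2 ≤ Fintype.card α) (k : ℕ) (w : List α) (halph : ∀ a : α, a ∈ w)
    (hk : univIdx Finset.univ w < k)
    (inners : List (List α)) (modus : List α) (rest : List α)
    (hfact : IsArchFact Finset.univ w inners modus rest) :
    (∀ w' : List α, univIdx Finset.univ w' = univIdx Finset.univ w →
        (ScatFact k w').ncard ≤ (ScatFact k w).ncard) ↔
    (∃! a : α, ScatFact k w =
        {v : List α | v.length = k ∧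
          (modus ++ [a]) ∉ ScatFact (univIdx Finset.univ w + 1) v}) :=
  stmt2_general k w hk inners modus rest hfact
end

section
/- Let Σ be a finite alphabet with |Σ| = σ ≥ 2, let k be a natural number, and let w be a word over Σ with alph(w) = Σ and k > ι(w) such that for all words w' over Σ with ι(w') = ι(w) we have |ScatFact_k(w)| ≥ |ScatFact_k(w')|. Then |ScatFact_k(w)| = Σ_{j=0}^{ι(w)} C(k, j) · (σ − 1)^{k − j}, where C(k, j) denotes the binomial coefficient. -/
open List

universe u
variable {α : Type u}

/-!
The upper bound is an induction on `k` driven by the first letter of a scattered factor: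
`x :: t` embeds in `w` iff `t` embeds in the suffix after the first `x`. These suffixes never
have a larger universality index than `w`, and if `w` contains every letter, the suffix after
the letter whose first occurrence comes last (the end of the first arch) has a strictly
smaller one. This yields the recurrence of the number of words of length `k` with fewer than
`ι(w) + 1` occurrences of a fixed letter `a`, which is the right-hand side. The bound is
attained by `ι(w)` letters `a` separating blocks that contain every `a`-free word of length
`k`: it has index `ι(w)` and every word with at most `ι(w)` letters `a` as a scattered factor.
-/

open Finset

-- words of length `k` over `c + 1` letters with fewer than `i` occurrences of a fixed letter,
-- counted by the set of `j < i` positions of that letter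
def numWordsCountLt (c k i : ℕ) : ℕ :=
  ∑ j ∈ range i, k.choose j * c ^ (k - j)

@[simp]
lemma numWordsCountLt_zero_right (c k : ℕ) : numWordsCountLt c k 0 = 0 := rfl

@[simp]
lemma numWordsCountLt_zero_succ (c i : ℕ) : numWordsCountLt c 0 (i + 1) = 1 := by
  simp [numWordsCountLt, Finset.sum_range_succ']

lemma numWordsCountLt_succ_succ (c k i : ℕ) :
    numWordsCountLt c (k + 1) (i + 1) =
      c * numWordsCountLt c k (i + 1) + numWordsCountLt c k i := by
  have pascal : ∀ j, (k + 1).choose (j + 1) * c ^ (k + 1 - (j + 1)) =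
      c * (k.choose (j + 1) * c ^ (k - (j + 1))) + k.choose j * c ^ (k - j) := by
    intro j
    rcases Nat.lt_or_ge j k with hjk | hjk
    · obtain ⟨m, rfl⟩ : ∃ m, k = j + 1 + m := ⟨k - (j + 1), by omega⟩
      rw [Nat.choose_succ_succ, show j + 1 + m + 1 - (j + 1) = m + 1 by omega,
        show j + 1 + m - j = m + 1 by omega, Nat.add_sub_cancel_left, pow_succ]
      ring
    · rw [Nat.choose_eq_zero_of_lt (by omega : k < j + 1), Nat.choose_succ_succ,
        Nat.choose_eq_zero_of_lt (by omega : k < j + 1)]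
      simp [show k + 1 - (j + 1) = k - j by omega]
  unfold numWordsCountLt
  rw [Finset.sum_range_succ', mul_sum,
    Finset.sum_range_succ' (fun j => c * (k.choose j * c ^ (k - j)))]
  simp only [pascal, sum_add_distrib, Nat.choose_zero_right, Nat.sub_zero, pow_succ]
  ring

section

variable [DecidableEq α]

def firstTail (w : List α) (x : α) : List α :=
  w.drop (w.idxOf x + 1)

lemma notMem_take_idxOf (w : List α) (x : α) : x ∉ w.take (w.idxOf x) := fun h =>
  (Nat.lt_irrefl _) ((mem_take_iff_idxOf_lt (mem_of_mem_take h)).1 h)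

lemma take_idxOf_append_cons_firstTail {w : List α} {x : α} (hx : x ∈ w) :
    w.take (w.idxOf x) ++ x :: firstTail w x = w := by
  have hlt : w.idxOf x < w.length := idxOf_lt_length_iff.2 hx
  conv_rhs => rw [← take_append_drop (w.idxOf x) w, drop_eq_getElem_cons hlt, getElem_idxOf hlt]
  rfl

lemma cons_sublist_iff_mem_sublist_firstTail {w t : List α} {x : α} :
    x :: t <+ w ↔ x ∈ w ∧ t <+ firstTail w x := by
  refine ⟨fun h => ⟨h.subset mem_cons_self, ?_⟩, fun ⟨hx, h⟩ => ?_⟩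
  · induction w with
    | nil => simp at h
    | cons y w ih =>
      rcases eq_or_ne y x with rfl | hyx
      · simpa [firstTail] using cons_sublist_cons.1 h
      · rw [firstTail, idxOf_cons_ne _ (by simpa using hyx)]
        exact ih (by cases h <;> simp_all)
  · rw [← take_idxOf_append_cons_firstTail hx]
    exact (h.cons_cons x).trans (sublist_append_right _ _)

variable {S : Finset α} {w : List α}

lemma isKUniversal_zero (S : Finset α) (w : List α) : IsKUniversal S 0 w := by
  intro v hv _
  simp [length_eq_zero_iff.1 hv]

lemma bddAbove_isKUniversal (hS : S.Nonempty) (w : List α) :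
    BddAbove {k | IsKUniversal S k w} := by
  obtain ⟨a, ha⟩ := hS
  refine ⟨w.length, fun k hk => ?_⟩
  simpa using (hk (replicate k a) length_replicate (by simp [ha])).length_le

lemma isKUniversal_univIdx (hS : S.Nonempty) (w : List α) : IsKUniversal S (univIdx S w) w :=
  Nat.sSup_mem ⟨0, isKUniversal_zero S w⟩ (bddAbove_isKUniversal hS w)

lemma le_univIdx (hS : S.Nonempty) {k : ℕ} (h : IsKUniversal S k w) : k ≤ univIdx S w :=
  le_csSup (bddAbove_isKUniversal hS w) h

lemma univIdx_le {n : ℕ} (h : ∀ k, IsKUniversal S k w → k ≤ n) : univIdx S w ≤ n :=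
  csSup_le ⟨0, isKUniversal_zero S w⟩ h

lemma univIdx_mono (hS : S.Nonempty) {u : List α} (h : u <+ w) : univIdx S u ≤ univIdx S w :=
  univIdx_le fun _ hk => le_univIdx hS fun v hv hvS => (hk v hv hvS).trans h

lemma univIdx_firstTail_lt (hS : S.Nonempty) {x : α}
    (hx : ∀ y ∈ S, y ∈ w.take (w.idxOf x + 1)) : univIdx S (firstTail w x) < univIdx S w := by
  refine le_univIdx hS fun v hv hvS => ?_
  obtain ⟨y, t, rfl⟩ := exists_cons_of_length_eq_add_one hv
  have hy : [y] <+ w.take (w.idxOf x + 1) := singleton_sublist.2 (hx y (hvS y mem_cons_self))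
  have ht : t <+ firstTail w x :=
    isKUniversal_univIdx hS _ t (by simpa using hv) fun z hz => hvS z (mem_cons_of_mem y hz)
  simpa [firstTail] using hy.append ht

-- the letter of `S` whose first occurrence in `w` comes last ends the first arch of `w`
lemma exists_univIdx_firstTail_lt (hS : S.Nonempty) (hw : ∀ y ∈ S, y ∈ w) :
    ∃ x, univIdx S (firstTail w x) < univIdx S w := by
  obtain ⟨x, -, hx⟩ := S.exists_max_image (w.idxOf ·) hS
  exact ⟨x, univIdx_firstTail_lt hS fun y hy =>
    (mem_take_iff_idxOf_lt (hw y hy)).2 (Nat.lt_succ_of_le (hx y hy))⟩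

end

section Counting

variable [Fintype α]

def words (k : ℕ) : Finset (List α) :=
  (univ : Finset (List.Vector α k)).map ⟨List.Vector.toList, List.Vector.toList_injective⟩

@[simp]
lemma mem_words {k : ℕ} {v : List α} : v ∈ words k ↔ v.length = k :=
  ⟨fun h => by obtain ⟨u, -, rfl⟩ := Finset.mem_map.1 h; exact u.toList_length,
    fun h => Finset.mem_map.2 ⟨⟨v, h⟩, mem_univ _, rfl⟩⟩

lemma words_zero : (words 0 : Finset (List α)) = {[]} := by
  ext v
  simp [length_eq_zero_iff]

lemma card_filter_words_succ (k : ℕ) (P : List α → Prop) [DecidablePred P] :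
    #((words (k + 1)).filter P) = ∑ x, #((words k).filter fun t => P (x :: t)) := by
  have hsplit : (words (k + 1)).filter P =
      (univ.sigma fun x => (words k).filter fun t => P (x :: t)).map
        ⟨fun p => p.1 :: p.2, fun p q h => by cases p; cases q; simp_all⟩ := by
    ext v
    cases v with
    | nil => simp
    | cons x t =>
      simp only [Finset.mem_filter, mem_words, length_cons, Nat.add_right_cancel_iff,
        Finset.mem_map, Finset.mem_sigma, mem_univ, true_and, Sigma.exists]
      exact ⟨fun h => ⟨x, t, h, rfl⟩, fun ⟨a, b, h, he⟩ => by cases he; exact h⟩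
  rw [hsplit, card_map, card_sigma]

variable [DecidableEq α]

def scatFinset (k : ℕ) (w : List α) : Finset (List α) :=
  (words k).filter (· <+ w)

lemma ncard_scatFact (k : ℕ) (w : List α) : (ScatFact k w).ncard = #(scatFinset k w) := by
  rw [← Set.ncard_coe_finset]
  congr 1
  ext v
  simp [ScatFact, scatFinset]

lemma card_scatFinset_succ (k : ℕ) (w : List α) :
    #(scatFinset (k + 1) w) = ∑ x ∈ w.toFinset, #(scatFinset k (firstTail w x)) := by
  rw [scatFinset, card_filter_words_succ, ← sum_subset (subset_univ w.toFinset)]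
  · refine sum_congr rfl fun x hx => ?_
    simp only [scatFinset, cons_sublist_iff_mem_sublist_firstTail, mem_toFinset.1 hx, true_and]
  · intro x _ hx
    simp [cons_sublist_iff_mem_sublist_firstTail, mem_toFinset.not.1 hx]

lemma card_filter_count_lt (a : α) (k i : ℕ) :
    #((words k).filter fun v => v.count a < i) = numWordsCountLt (Fintype.card α - 1) k i := by
  induction k generalizing i with
  | zero => cases i <;> simp [words_zero, Finset.filter_singleton]
  | succ k ih =>
    have hother : ∀ x ∈ univ.erase a, #((words k).filter fun t => (x :: t).count a < i) =
        numWordsCountLt (Fintype.card α - 1) k i := fun x hx => by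
      simp only [count_cons_of_ne (ne_of_mem_erase hx), ih]
    rw [card_filter_words_succ, ← add_sum_erase _ _ (mem_univ a), sum_congr rfl hother, sum_const,
      card_erase_of_mem (mem_univ a), card_univ, smul_eq_mul]
    cases i with
    | zero => simp
    | succ i =>
      simp only [count_cons_self, Nat.add_lt_add_iff_right, ih, numWordsCountLt_succ_succ]
      ring

lemma card_scatFinset_le [Nonempty α] {k i : ℕ} {w : List α} (hw : univIdx univ w < i) :
    #(scatFinset k w) ≤ numWordsCountLt (Fintype.card α - 1) k i := by
  induction k generalizing w i with
  | zero =>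
    obtain ⟨i, rfl⟩ : ∃ i', i = i' + 1 := ⟨i - 1, by omega⟩
    exact (card_filter_le _ _).trans (by simp [words_zero])
  | succ k ih =>
    obtain ⟨i, rfl⟩ : ∃ i', i = i' + 1 := ⟨i - 1, by omega⟩
    have hle : ∀ x,
        #(scatFinset k (firstTail w x)) ≤ numWordsCountLt (Fintype.card α - 1) k (i + 1) :=
      fun x => ih ((univIdx_mono univ_nonempty (drop_sublist _ _)).trans_lt hw)
    rw [card_scatFinset_succ, numWordsCountLt_succ_succ]
    by_cases hall : ∀ y, y ∈ w
    · obtain ⟨x, hx⟩ := exists_univIdx_firstTail_lt univ_nonempty fun y _ => hall y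
      have hrest := sum_le_card_nsmul (univ.erase x) _ _ fun y _ => hle y
      rw [card_erase_of_mem (mem_univ x), card_univ, smul_eq_mul] at hrest
      rw [eq_univ_of_forall fun y => mem_toFinset.2 (hall y), ← add_sum_erase _ _ (mem_univ x),
        add_comm]
      exact add_le_add hrest (ih (by omega))
    · obtain ⟨y, hy⟩ := not_forall.1 hall
      have hcard : #w.toFinset ≤ Fintype.card α - 1 := by
        rw [← card_univ, ← card_erase_of_mem (mem_univ y)]
        exact card_le_card fun x hx =>
          mem_erase.2 ⟨fun h => hy (h ▸ mem_toFinset.1 hx), mem_univ x⟩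
      calc ∑ x ∈ w.toFinset, #(scatFinset k (firstTail w x))
          ≤ #w.toFinset * numWordsCountLt (Fintype.card α - 1) k (i + 1) :=
            sum_le_card_nsmul _ _ _ fun x _ => hle x
        _ ≤ (Fintype.card α - 1) * numWordsCountLt (Fintype.card α - 1) k (i + 1) :=
            Nat.mul_le_mul_right _ hcard
        _ ≤ _ := Nat.le_add_right _ _

end Counting

lemma sublist_flatten_replicate {e v : List α} {m : ℕ} (hv : v.length ≤ m)
    (he : ∀ y ∈ v, y ∈ e) : v <+ (replicate m e).flatten := by
  induction m generalizing v with
  | zero => simp [length_eq_zero_iff.1 (Nat.le_zero.1 hv)]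
  | succ m ih =>
    cases v with
    | nil => exact nil_sublist _
    | cons y t =>
      rw [replicate_succ, flatten_cons, ← singleton_append]
      exact (singleton_sublist.2 (he y mem_cons_self)).append
        (ih (by simpa using hv) fun z hz => he z (mem_cons_of_mem y hz))

section Blocks

variable [Fintype α] [DecidableEq α]

noncomputable def avoidBlock (a : α) (k : ℕ) : List α :=
  (replicate k (univ.erase a).toList).flatten

lemma notMem_avoidBlock (a : α) (k : ℕ) : a ∉ avoidBlock a k := by
  simp [avoidBlock, mem_flatten, mem_replicate]

lemma sublist_avoidBlock {a : α} {k : ℕ} {v : List α} (hv : v.length ≤ k) (ha : a ∉ v) :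
    v <+ avoidBlock a k :=
  sublist_flatten_replicate hv fun y hy => by simpa using ne_of_mem_of_not_mem hy ha

noncomputable def sepBlocks (a : α) (k : ℕ) : ℕ → List α
  | 0 => avoidBlock a k
  | i + 1 => avoidBlock a k ++ a :: sepBlocks a k i

lemma count_sepBlocks (a : α) (k i : ℕ) : (sepBlocks a k i).count a = i := by
  induction i with
  | zero => exact count_eq_zero.2 (notMem_avoidBlock a k)
  | succ i ih => simp [sepBlocks, count_eq_zero.2 (notMem_avoidBlock a k), ih]

lemma sublist_sepBlocks {a : α} {k i : ℕ} {v : List α} (hv : v.length ≤ k)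
    (hc : v.count a ≤ i) : v <+ sepBlocks a k i := by
  induction i generalizing v with
  | zero => exact sublist_avoidBlock hv (count_eq_zero.1 (Nat.le_zero.1 hc))
  | succ i ih =>
    by_cases ha : a ∈ v
    · have hsplit := take_idxOf_append_cons_firstTail ha
      have hcount : (firstTail v a).count a + 1 = v.count a := by
        conv_rhs => rw [← hsplit]
        simp [count_eq_zero.2 (notMem_take_idxOf v a)]
      rw [← hsplit]
      refine (sublist_avoidBlock ?_ (notMem_take_idxOf v a)).append
        ((ih ?_ (by omega)).cons_cons a)
      · exact (length_take_le' _ _).trans hv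
      · exact (drop_sublist _ _).length_le.trans hv
    · exact (sublist_avoidBlock hv ha).trans (sublist_append_left _ _)

lemma univIdx_sepBlocks (a : α) {k i : ℕ} (hik : i ≤ k) :
    univIdx univ (sepBlocks a k i) = i := by
  refine le_antisymm (univIdx_le fun m hm => ?_) (le_univIdx ⟨a, mem_univ a⟩ fun v hv _ => ?_)
  · simpa [count_sepBlocks] using (hm (replicate m a) length_replicate (by simp)).count_le a
  · exact sublist_sepBlocks (hv.trans_le hik) (hv ▸ count_le_length)

lemma filter_count_lt_subset_scatFinset (a : α) (k i : ℕ) :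
    (words k).filter (fun v => v.count a < i + 1) ⊆ scatFinset k (sepBlocks a k i) := by
  intro v hv
  obtain ⟨hlen, hc⟩ := Finset.mem_filter.1 hv
  exact Finset.mem_filter.2
    ⟨hlen, sublist_sepBlocks (mem_words.1 hlen).le (Nat.le_of_lt_succ hc)⟩

end Blocks

theorem stmt3_general {α : Type u} [Fintype α] [DecidableEq α]
    (hsigma : 2 ≤ Fintype.card α) (k : ℕ) (w : List α)
    (hk : univIdx Finset.univ w < k)
    (hmax : ∀ w' : List α, univIdx Finset.univ w' = univIdx Finset.univ w →
        (ScatFact k w').ncard ≤ (ScatFact k w).ncard) :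
    (ScatFact k w).ncard =
      ∑ j ∈ Finset.range (univIdx Finset.univ w + 1),
        Nat.choose k j * (Fintype.card α - 1) ^ (k - j) := by
  obtain ⟨a⟩ : Nonempty α := Fintype.card_pos_iff.1 (by omega)
  have : Nonempty α := ⟨a⟩
  set ι := univIdx univ w
  change _ = numWordsCountLt (Fintype.card α - 1) k (ι + 1)
  refine le_antisymm ((ncard_scatFact k w).trans_le (card_scatFinset_le ι.lt_succ_self)) ?_
  calc numWordsCountLt (Fintype.card α - 1) k (ι + 1)
      = #((words k).filter fun v => v.count a < ι + 1) := (card_filter_count_lt a k _).symm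
    _ ≤ #(scatFinset k (sepBlocks a k ι)) :=
        card_le_card (filter_count_lt_subset_scatFinset a k ι)
    _ = (ScatFact k (sepBlocks a k ι)).ncard := (ncard_scatFact _ _).symm
    _ ≤ (ScatFact k w).ncard := hmax _ (univIdx_sepBlocks a hk.le)

theorem stmt3 {α : Type u} [Fintype α] [DecidableEq α]
    (hsigma : 2 ≤ Fintype.card α) (k : ℕ) (w : List α) (halph : ∀ a : α, a ∈ w)
    (hk : univIdx Finset.univ w < k)
    (hmax : ∀ w' : List α, univIdx Finset.univ w' = univIdx Finset.univ w →
        (ScatFact k w').ncard ≤ (ScatFact k w).ncard) :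
    (ScatFact k w).ncard =
      ∑ j ∈ Finset.range (univIdx Finset.univ w + 1),
        Nat.choose k j * (Fintype.card α - 1) ^ (k - j) :=
  stmt3_general hsigma k w hk hmax
end

section
/- Let Σ be a finite alphabet with |Σ| = σ ≥ 2, let k be a natural number, and let w be a word over Σ with alph(w) = Σ and k > ι(w) such that for every word w' over Σ with ι(w') = ι(w) we have |ScatFact_k(w)| ≥ |ScatFact_k(w')|. Then there exists a letter a ∈ Σ such that the rest r(w) of the arch factorization of w is (k − ι(w))-universal over the alphabet Σ \ {a}. -/
open List

universe u
variable {α : Type u}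

private lemma cons_sublist_of_notMem {a : α} {l u t : List α}
    (h : (a :: l) <+ u ++ t) (ha : a ∉ u) : (a :: l) <+ t := by
  rw [List.sublist_append_iff] at h
  obtain ⟨l₁, l₂, heq, h₁, h₂⟩ := h
  cases l₁ with
  | nil =>
    have : a :: l = l₂ := by simpa using heq
    exact this ▸ h₂
  | cons b l₁' =>
    exfalso
    have hb : b = a := by simpa using congrArg (·.head?) heq.symm
    exact ha (h₁.subset (by simp [hb]))

private lemma forcing : ∀ (inners : List (List α)) (modus : List α),
    inners.length = modus.length →
    (∀ p ∈ List.zip inners modus, p.2 ∉ p.1) →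
    ∀ rest v : List α,
      (modus ++ v) <+ (List.zipWith (fun inn m => inn ++ [m]) inners modus).flatten ++ rest →
      v <+ rest := by
  intro inners
  induction inners with
  | nil =>
    intro modus hlen _ rest v h
    have : modus = [] := by simpa using hlen.symm
    subst this; simpa using h
  | cons inn inns ih =>
    intro modus hlen hnm rest v h
    cases modus with
    | nil => simp at hlen
    | cons m ms =>
      have hmnotin : m ∉ inn := hnm (inn, m) (by simp)
      have h' : (m :: (ms ++ v)) <+
          inn ++ ([m] ++ ((List.zipWith (fun inn m => inn ++ [m]) inns ms).flatten ++ rest)) := by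
        simpa [List.append_assoc] using h
      have h2 := cons_sublist_of_notMem h' hmnotin
      have h3 : (ms ++ v) <+
          (List.zipWith (fun inn m => inn ++ [m]) inns ms).flatten ++ rest := by
        exact (List.cons_sublist_cons).mp h2
      exact ih ms (by simpa using hlen) (fun p hp => hnm p (by simp [hp])) rest v h3

private lemma univ_embed : ∀ (inners : List (List α)) (modus : List α),
    inners.length = modus.length →
    (∀ p ∈ List.zip inners modus, ∀ x : α, x ∈ p.1 ++ [p.2]) →
    ∀ (rest v : List α), v.length ≤ modus.length →
      v <+ (List.zipWith (fun inn m => inn ++ [m]) inners modus).flatten ++ rest := by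
  intro inners
  induction inners with
  | nil =>
    intro modus hlen _ rest v hv
    have : modus = [] := by simpa using hlen.symm
    subst this
    simp at hv
    simp [hv]
  | cons inn inns ih =>
    intro modus hlen hall rest v hv
    cases modus with
    | nil => simp at hlen
    | cons m ms =>
      cases v with
      | nil => exact List.nil_sublist _
      | cons a v' =>
        have ha : a ∈ inn ++ [m] := hall (inn, m) (by simp) a
        have h1 : [a] <+ inn ++ [m] := List.singleton_sublist.mpr ha
        have h2 : v' <+ (List.zipWith (fun inn m => inn ++ [m]) inns ms).flatten ++ rest :=
          ih ms (by simpa using hlen) (fun p hp x => hall p (by simp [hp]) x) rest v'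
            (by simpa using hv)
        have := h1.append h2
        simpa [List.append_assoc] using this

private lemma modus_sublist : ∀ (inners : List (List α)) (modus : List α),
    inners.length = modus.length →
    modus <+ (List.zipWith (fun inn m => inn ++ [m]) inners modus).flatten := by
  intro inners
  induction inners with
  | nil =>
    intro modus hlen
    have : modus = [] := by simpa using hlen.symm
    simp [this]
  | cons inn inns ih =>
    intro modus hlen
    cases modus with
    | nil => simp
    | cons m ms =>
      have h1 : [m] <+ inn ++ [m] := by simp
      have h2 := ih ms (by simpa using hlen)
      simpa using h1.append h2

private lemma univIdx_eq [Fintype α] [DecidableEq α] [Nonempty α]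
    {w : List α} {inners : List (List α)} {modus rest : List α}
    (hfact : IsArchFact Finset.univ w inners modus rest) :
    univIdx Finset.univ w = modus.length := by
  obtain ⟨hlen, hw, hall, hnm, hrest⟩ := hfact
  have hdown : ∀ j k : ℕ, j ≤ k → IsKUniversal (Finset.univ : Finset α) k w →
      IsKUniversal Finset.univ j w := by
    intro j k hjk hU v hv _
    have h := hU (v ++ List.replicate (k - j) (Classical.arbitrary α))
      (by simp [hv]; omega) (by simp)
    exact (List.sublist_append_left v _).trans h
  have hU : IsKUniversal (Finset.univ : Finset α) modus.length w := by
    intro v hv _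
    rw [hw]
    exact univ_embed inners modus hlen (fun p hp x => hall p hp x (Finset.mem_univ x))
      rest v hv.le
  have hnot : ¬ IsKUniversal (Finset.univ : Finset α) (modus.length + 1) w := by
    obtain ⟨x, hxu, hxr⟩ := Finset.exists_of_ssubset hrest
    intro hU1
    have h1 := hU1 (modus ++ [x]) (by simp) (by simp)
    rw [hw] at h1
    have h2 := forcing inners modus hlen hnm rest [x] h1
    exact hxr (by simpa using h2.subset (List.mem_singleton_self x))
  have hset : {k | IsKUniversal (Finset.univ : Finset α) k w} = Set.Iic modus.length := by
    ext j
    constructor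
    · intro hj
      by_contra hjn
      simp only [Set.mem_Iic, not_le, Nat.lt_iff_add_one_le] at hjn
      exact hnot (hdown (modus.length + 1) j hjn hj)
    · intro hj
      exact hdown j modus.length hj hU
  unfold univIdx
  rw [hset]
  exact csSup_Iic


theorem stmt5 {α : Type u} [Fintype α] [DecidableEq α]
    (hsigma : 2 ≤ Fintype.card α) (k : ℕ) (w : List α) (halph : ∀ a : α, a ∈ w)
    (hk : univIdx Finset.univ w < k)
    (hmax : ∀ w' : List α, univIdx Finset.univ w' = univIdx Finset.univ w →
        (ScatFact k w').ncard ≤ (ScatFact k w).ncard)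
    (inners : List (List α)) (modus : List α) (rest : List α)
    (hfact : IsArchFact Finset.univ w inners modus rest) :
    ∃ a : α, IsKUniversal (Finset.univ \ {a}) (k - univIdx Finset.univ w) rest := by
  haveI : Nonempty α := Fintype.card_pos_iff.mp (by omega)
  obtain ⟨hlen, hw, hall, hnm, hrest⟩ := hfact
  have hn : univIdx Finset.univ w = modus.length :=
    univIdx_eq ⟨hlen, hw, hall, hnm, hrest⟩
  obtain ⟨a, hau, har⟩ := Finset.exists_of_ssubset hrest
  refine ⟨a, ?_⟩
  intro v hv hvS
  have hva : a ∉ v := by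
    intro hmem
    have := hvS a hmem
    simp at this
  have hfact' : IsArchFact Finset.univ (w ++ v) inners modus (rest ++ v) := by
    refine ⟨hlen, by rw [hw, List.append_assoc], hall, hnm, ?_⟩
    refine Finset.ssubset_univ_iff.mpr (fun h => ?_)
    have : a ∈ (rest ++ v).toFinset := h ▸ Finset.mem_univ a
    simp at this
    rcases this with h' | h'
    · exact har (List.mem_toFinset.mpr h')
    · exact hva h'
  have hn' : univIdx Finset.univ (w ++ v) = modus.length := univIdx_eq hfact'
  have hsub : ScatFact k w ⊆ ScatFact k (w ++ v) :=
    fun u hu => ⟨hu.1, hu.2.trans (List.sublist_append_left w v)⟩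
  have hfin : (ScatFact k (w ++ v)).Finite :=
    Set.Finite.subset ((w ++ v).sublists.toFinset.finite_toSet)
      (fun u hu => by simp only [Finset.coe_sort_coe, List.coe_toFinset, Set.mem_setOf_eq,
        List.mem_sublists]; exact hu.2)
  have heq : ScatFact k w = ScatFact k (w ++ v) :=
    Set.eq_of_subset_of_ncard_le hsub (hmax _ (hn'.trans hn.symm)) hfin
  have hms : modus <+ w := by
    rw [hw]
    exact (modus_sublist inners modus hlen).trans (List.sublist_append_left _ _)
  have hmem : modus ++ v ∈ ScatFact k (w ++ v) := by
    refine ⟨?_, hms.append (List.Sublist.refl v)⟩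
    rw [hn] at hv
    simp [hv]
    omega
  rw [← heq] at hmem
  have hsubw : (modus ++ v) <+ w := hmem.2
  rw [hw] at hsubw
  exact forcing inners modus hlen hnm rest v hsubw
end

section
/- Let Σ = {a_1, …, a_σ} be a finite alphabet with σ ≥ 2, let ι ≥ 1, and let w_min be the word of length ι·σ whose first arch is ar_1(w_min) = a_1 a_2 ⋯ a_σ and whose i-th arch is the reverse of its (i−1)-th arch for all 2 ≤ i ≤ ι. Then for each s ∈ [σ] and j ∈ [|w_min|], writing r = j mod σ: nextAlphPos_{w_min}(j, s) = j + s if r = 0 or s ≤ σ − r (and j + s ≤ |w_min|); nextAlphPos_{w_min}(j, s) = ⌊j/σ⌋·σ + σ + s if r ≠ 0, ⌊j/σ⌋ + 1 < ι, and s > σ − r; and nextAlphPos_{w_min}(j, s) = −1 otherwise. -/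
open List

universe u
variable {α : Type u}

/-! Every arch of `wmin` is a permutation of the alphabet and the next arch is the same
permutation read backwards. Reading from position `j = qσ + r`, the `σ - r` letters left in arch
`q` are pairwise distinct; the first `σ - r` letters of arch `q + 1` repeat exactly these, and
each later one is new. Hence `s` distinct letters are collected after `s` steps when they fit into
arch `q`, after `σ - r + s` steps when arch `q + 1` exists, and never otherwise. -/

section NextAlphPos

variable [DecidableEq α]

lemma card_toFinset_le_of_subset {l₁ l₂ : List α} (h : l₁ ⊆ l₂) :
    l₁.toFinset.card ≤ l₂.toFinset.card :=
  Finset.card_le_card fun _ hx => List.mem_toFinset.2 (h (List.mem_toFinset.1 hx))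

lemma nextAlphPos_eq_some {w : List α} {i s n : ℕ}
    (h_eq : ((w.drop i).take n).toFinset.card = s)
    (h_lt : ((w.drop i).take (n - 1)).toFinset.card < s) :
    nextAlphPos w i s = some (i + n) := by
  have h_enough : ¬ (w.drop i).toFinset.card < s := by
    rw [not_lt, ← h_eq]
    exact card_toFinset_le_of_subset (List.take_subset _ _)
  rw [nextAlphPos, if_neg h_enough, Option.some_inj]
  have h_mem : i + n ∈ {j | ((w.drop i).take (j - i)).toFinset.card = s} := by
    show ((w.drop i).take (i + n - i)).toFinset.card = s
    rwa [Nat.add_sub_cancel_left]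
  refine le_antisymm (Nat.sInf_le h_mem) (le_csInf ⟨_, h_mem⟩ fun k hk => ?_)
  by_contra! hkn
  have h_prefix : (w.drop i).take (k - i) ⊆ (w.drop i).take (n - 1) :=
    (List.take_sublist_take_left (by omega)).subset
  have := card_toFinset_le_of_subset h_prefix
  rw [show ((w.drop i).take (k - i)).toFinset.card = s from hk] at this
  omega

lemma nextAlphPos_eq_none {w : List α} {i s : ℕ} (h : w.length - i < s) :
    nextAlphPos w i s = none := by
  have : (w.drop i).toFinset.card < s :=
    (List.toFinset_card_le _).trans_lt (by rwa [List.length_drop])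
  rw [nextAlphPos, if_pos this]

end NextAlphPos

lemma drop_subset_take_reverse (l : List α) {r m : ℕ} (h : l.length ≤ r + m) :
    l.drop r ⊆ l.reverse.take m := by
  rw [List.take_reverse]
  exact fun x hx => List.mem_reverse.2 (List.drop_subset_drop_left l (by omega) hx)

section Wmin

variable {σ ι q r : ℕ}

/-- Arch number `i` of `wmin σ ι`, counting from `0`. -/
def wminArch (σ i : ℕ) : List (Fin σ) :=
  if i % 2 = 0 then List.finRange σ else (List.finRange σ).reverse

lemma wminArch_length (σ i : ℕ) : (wminArch σ i).length = σ := by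
  unfold wminArch; split <;> simp

lemma wminArch_nodup (σ i : ℕ) : (wminArch σ i).Nodup := by
  unfold wminArch; split
  · exact List.nodup_finRange σ
  · exact List.nodup_reverse.2 (List.nodup_finRange σ)

lemma wminArch_succ (σ i : ℕ) : wminArch σ (i + 1) = (wminArch σ i).reverse := by
  unfold wminArch
  rcases Nat.mod_two_eq_zero_or_one i with h | h <;> simp [Nat.add_mod, h]

lemma wmin_eq_flatten (σ ι : ℕ) :
    wmin σ ι = ((List.range ι).map (wminArch σ)).flatten := rfl

lemma wmin_succ (σ ι : ℕ) : wmin σ (ι + 1) = wmin σ ι ++ wminArch σ ι := by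
  rw [wmin_eq_flatten, wmin_eq_flatten, List.range_succ, List.map_append, List.flatten_append,
    List.map_singleton, List.flatten_singleton]

lemma wmin_length (σ ι : ℕ) : (wmin σ ι).length = ι * σ := by
  induction ι with
  | zero => simp [wmin]
  | succ ι ih => rw [wmin_succ, List.length_append, ih, wminArch_length, Nat.succ_mul]

lemma wmin_prefix_wmin {ι ι' : ℕ} (h : ι ≤ ι') : wmin σ ι <+: wmin σ ι' := by
  induction ι', h using Nat.le_induction with
  | base => exact List.prefix_rfl
  | succ ι' _ ih => exact ih.trans (by rw [wmin_succ]; exact List.prefix_append _ _)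

lemma drop_wmin (hq : q < ι) (hr : r ≤ σ) :
    (wmin σ ι).drop (q * σ + r) =
      (wminArch σ q).drop r ++ (wmin σ ι).drop ((q + 1) * σ) := by
  obtain ⟨rest, h_rest⟩ := wmin_prefix_wmin (σ := σ) (Nat.succ_le_of_lt hq)
  have h_split : wmin σ ι = wmin σ q ++ (wminArch σ q ++ rest) := by
    rw [← h_rest, wmin_succ, List.append_assoc]
  have h_len : (wmin σ q).length = q * σ := wmin_length σ q
  have h_next : (q + 1) * σ = (wmin σ q).length + (wminArch σ q).length := by
    rw [h_len, wminArch_length, Nat.succ_mul]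
  rw [h_next, h_split, ← List.append_assoc, ← List.length_append, List.drop_append_length,
    List.append_assoc, ← h_len, List.drop_length_add_append,
    List.drop_append_of_le_length (by rwa [wminArch_length])]

lemma card_toFinset_take_drop_wmin_of_le (hq : q < ι) {n : ℕ} (hn : r + n ≤ σ) :
    (((wmin σ ι).drop (q * σ + r)).take n).toFinset.card = n := by
  have h_len : ((wminArch σ q).drop r).length = σ - r := by
    rw [List.length_drop, wminArch_length]
  rw [drop_wmin hq (by omega), List.take_append_of_le_length (by omega),
    List.toFinset_card_of_nodup ((wminArch_nodup σ q).sublist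
      ((List.take_sublist _ _).trans (List.drop_sublist _ _))),
    List.length_take, h_len]
  omega

lemma card_toFinset_take_drop_wmin_of_ge (hq : q + 1 < ι) (hr : r ≤ σ) {m : ℕ}
    (hm : σ ≤ r + m) (hmσ : m ≤ σ) :
    (((wmin σ ι).drop (q * σ + r)).take (σ - r + m)).toFinset.card = m := by
  have h_len : ((wminArch σ q).drop r).length = σ - r := by
    rw [List.length_drop, wminArch_length]
  have h_sub : (wminArch σ q).drop r ⊆ (wminArch σ (q + 1)).take m := by
    rw [wminArch_succ]
    exact drop_subset_take_reverse _ (by rw [wminArch_length]; omega)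
  rw [drop_wmin (q := q) (by omega) hr, ← Nat.add_zero ((q + 1) * σ),
    drop_wmin hq (Nat.zero_le σ), List.drop_zero, List.take_append, h_len, Nat.add_sub_cancel_left,
    List.take_of_length_le (by omega), List.take_append_of_le_length (by rwa [wminArch_length]),
    List.toFinset_append, Finset.union_eq_right.2 fun x hx =>
      List.mem_toFinset.2 (h_sub (List.mem_toFinset.1 hx)),
    List.toFinset_card_of_nodup ((wminArch_nodup σ _).sublist (List.take_sublist _ _)),
    List.length_take, wminArch_length]
  omega

lemma nextAlphPos_wmin_of_le (hq : q < ι) {s : ℕ} (hs : 0 < s) (hrs : r + s ≤ σ) :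
    nextAlphPos (wmin σ ι) (q * σ + r) s = some (q * σ + r + s) :=
  nextAlphPos_eq_some (card_toFinset_take_drop_wmin_of_le hq hrs) <| by
    rw [card_toFinset_take_drop_wmin_of_le hq (by omega)]
    omega

lemma nextAlphPos_wmin_of_gt (hq : q + 1 < ι) (hr : r ≤ σ) {s : ℕ} (hrs : σ < r + s)
    (hs : s ≤ σ) :
    nextAlphPos (wmin σ ι) (q * σ + r) s = some ((q + 1) * σ + s) := by
  have h_eq := card_toFinset_take_drop_wmin_of_ge hq hr hrs.le hs
  have h_lt : (((wmin σ ι).drop (q * σ + r)).take (σ - r + s - 1)).toFinset.card < s := by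
    rw [Nat.add_sub_assoc (by omega), card_toFinset_take_drop_wmin_of_ge hq hr (by omega)
      (by omega)]
    omega
  rw [nextAlphPos_eq_some h_eq h_lt, Nat.succ_mul]
  congr 1
  omega

end Wmin

theorem stmt17_general (sigma iota : ℕ) (hsigma : 2 ≤ sigma)
    (s j : ℕ) (hs1 : 1 ≤ s) (hs2 : s ≤ sigma)
    (hj2 : j ≤ (wmin sigma iota).length) :
    ((j % sigma = 0 ∨ s ≤ sigma - j % sigma) ∧ j + s ≤ (wmin sigma iota).length →
        nextAlphPos (wmin sigma iota) j s = some (j + s)) ∧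
    (j % sigma ≠ 0 ∧ j / sigma + 1 < iota ∧ sigma - j % sigma < s →
        nextAlphPos (wmin sigma iota) j s = some (j / sigma * sigma + sigma + s)) ∧
    (¬ ((j % sigma = 0 ∨ s ≤ sigma - j % sigma) ∧ j + s ≤ (wmin sigma iota).length) →
      ¬ (j % sigma ≠ 0 ∧ j / sigma + 1 < iota ∧ sigma - j % sigma < s) →
        nextAlphPos (wmin sigma iota) j s = none) := by
  have hσ : 0 < sigma := by omega
  have h_div := Nat.div_add_mod' j sigma
  have h_mod := Nat.mod_lt j hσ
  rw [wmin_length] at hj2 ⊢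
  refine ⟨fun ⟨h_within, h_len⟩ => ?_, fun ⟨_, h_next, h_across⟩ => ?_,
    fun h_not_within h_not_across => nextAlphPos_eq_none ?_⟩
  · have hq : j / sigma < iota := (Nat.div_lt_iff_lt_mul hσ).2 (by omega)
    have := nextAlphPos_wmin_of_le (σ := sigma) (r := j % sigma) hq hs1 (by omega)
    rwa [h_div] at this
  · have := nextAlphPos_wmin_of_gt h_next h_mod.le (by omega) hs2
    rwa [h_div, Nat.succ_mul] at this
  · rw [wmin_length]
    by_contra! h_len
    have hq : j / sigma < iota := (Nat.div_lt_iff_lt_mul hσ).2 (by omega)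
    have h_last : iota = j / sigma + 1 := by
      by_contra
      exact h_not_across ⟨by omega, by omega, by omega⟩
    rw [h_last, Nat.succ_mul] at h_len h_not_within
    omega

theorem stmt17 (sigma iota : ℕ) (hsigma : 2 ≤ sigma) (hiota : 1 ≤ iota)
    (s j : ℕ) (hs1 : 1 ≤ s) (hs2 : s ≤ sigma)
    (hj1 : 1 ≤ j) (hj2 : j ≤ (wmin sigma iota).length) :
    ((j % sigma = 0 ∨ s ≤ sigma - j % sigma) ∧ j + s ≤ (wmin sigma iota).length →
        nextAlphPos (wmin sigma iota) j s = some (j + s)) ∧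
    (j % sigma ≠ 0 ∧ j / sigma + 1 < iota ∧ sigma - j % sigma < s →
        nextAlphPos (wmin sigma iota) j s = some (j / sigma * sigma + sigma + s)) ∧
    (¬ ((j % sigma = 0 ∨ s ≤ sigma - j % sigma) ∧ j + s ≤ (wmin sigma iota).length) →
      ¬ (j % sigma ≠ 0 ∧ j / sigma + 1 < iota ∧ sigma - j % sigma < s) →
        nextAlphPos (wmin sigma iota) j s = none) :=
  stmt17_general sigma iota hsigma s j hs1 hs2 hj2
end
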